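/- arXiv:2310.05433 — 2 statements merged into one kernel-verified Lean document; each statement's English description precedes it below -/
import Mathlib

section
/- For every r ≥ 5/4, ∫₀^r 4π · h(s)/s ds > log r. (Indeed ∫₀^r (4π·h(s) − 1_{s>1})/s ds = ∫₀^{1/4} 4π·h(1−t) · (2t/(1−t²)) dt > 0, using the symmetry h(1+t) + h(1−t) = 1/(4π) and the strict monotonicity of s ↦ 1/s.) -/
/-- The cut-off function `h`: `h r = 0` for `r ≤ 3/4`,
`h r = (1/(4π)) (1 + exp((r−1)/((r−1)² − 1/16)))⁻¹` for `3/4 < r < 5/4`, and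
`h r = 1/(4π)` for `r ≥ 5/4`. -/
noncomputable def h (r : ℝ) : ℝ :=
  if r ≤ 3 / 4 then 0
  else if r < 5 / 4 then
    (1 / (4 * Real.pi)) * (1 + Real.exp ((r - 1) / ((r - 1) ^ 2 - 1 / 16)))⁻¹
  else 1 / (4 * Real.pi)

open Real MeasureTheory Set intervalIntegral

lemma h_meas : Measurable h := by
  unfold h
  apply Measurable.ite (measurableSet_le measurable_id measurable_const) measurable_const
  apply Measurable.ite (measurableSet_lt measurable_id measurable_const) _ measurable_const
  fun_prop

lemma h_nonneg (r : ℝ) : 0 ≤ h r := by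
  have hp := Real.pi_pos
  unfold h
  split_ifs with h1 h2
  · exact le_rfl
  · positivity
  · positivity

lemma h_le (r : ℝ) : h r ≤ 1 / (4 * Real.pi) := by
  have hp := Real.pi_pos
  unfold h
  split_ifs with h1 h2
  · positivity
  · have hE := Real.exp_pos ((r - 1) / ((r - 1) ^ 2 - 1 / 16))
    have hinv : (1 + Real.exp ((r - 1) / ((r - 1) ^ 2 - 1 / 16)))⁻¹ ≤ 1 := by
      rw [inv_le_one_iff₀]; right; linarith
    calc (1 / (4 * Real.pi)) * (1 + Real.exp ((r - 1) / ((r - 1) ^ 2 - 1 / 16)))⁻¹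
        ≤ (1 / (4 * Real.pi)) * 1 := by
          apply mul_le_mul_of_nonneg_left hinv (by positivity)
      _ = 1 / (4 * Real.pi) := by ring
  · exact le_rfl

lemma intable {f : ℝ → ℝ} (hf : Measurable f) {C a b : ℝ}
    (hb : ∀ x ∈ Set.uIcc a b, |f x| ≤ C) : IntervalIntegrable f volume a b := by
  rw [intervalIntegrable_iff]
  apply MeasureTheory.Measure.integrableOn_of_bounded (M := C) measure_Ioc_lt_top.ne
    hf.aestronglyMeasurable
  filter_upwards [MeasureTheory.ae_restrict_mem measurableSet_uIoc] with x hx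
  simpa [Real.norm_eq_abs] using hb x (Set.uIoc_subset_uIcc hx)

lemma g_bdd (s : ℝ) : |4 * Real.pi * h s / s| ≤ 4 / 3 := by
  have hp := Real.pi_pos
  by_cases hs : s ≤ 3 / 4
  · have : h s = 0 := by unfold h; rw [if_pos hs]
    rw [this]; norm_num
  · push_neg at hs
    have hs0 : 0 < s := by linarith
    have hnum : 4 * Real.pi * h s ≤ 1 := by
      have := h_le s
      calc 4 * Real.pi * h s ≤ 4 * Real.pi * (1 / (4 * Real.pi)) := by
            apply mul_le_mul_of_nonneg_left this (by positivity)
        _ = 1 := by field_simp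
    have hnn : 0 ≤ 4 * Real.pi * h s / s := by
      have := h_nonneg s; positivity
    rw [abs_of_nonneg hnn, div_le_iff₀ hs0]
    nlinarith

lemma g_meas : Measurable (fun s : ℝ => 4 * Real.pi * h s / s) :=
  (measurable_const.mul h_meas).div measurable_id

lemma g_int (a b : ℝ) :
    IntervalIntegrable (fun s : ℝ => 4 * Real.pi * h s / s) volume a b :=
  intable g_meas (fun x _ => g_bdd x)

lemma g_int_sub (a b : ℝ) :
    IntervalIntegrable (fun t : ℝ => 4 * Real.pi * h (1 - t) / (1 - t)) volume a b :=
  intable (g_meas.comp (measurable_const.sub measurable_id)) (fun x _ => g_bdd (1 - x))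

lemma g_int_add (a b : ℝ) :
    IntervalIntegrable (fun t : ℝ => 4 * Real.pi * h (1 + t) / (1 + t)) volume a b :=
  intable (g_meas.comp (measurable_const.add measurable_id)) (fun x _ => g_bdd (1 + x))

/-- The surplus integrand. -/
noncomputable def F (t : ℝ) : ℝ := 4 * Real.pi * h (1 - t) * (1 / (1 - t) - 1 / (1 + t))

lemma F_meas : Measurable F := by
  unfold F
  have : Measurable (fun t : ℝ => h (1 - t)) := h_meas.comp (measurable_const.sub measurable_id)
  fun_prop

lemma F_bdd {a b : ℝ} (ha : (0:ℝ) ≤ a) (hab : a ≤ b) (hb : b ≤ 1/4) :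
    ∀ x ∈ Set.uIcc a b, |F x| ≤ 3 := by
  intro x hx
  rw [Set.uIcc_of_le hab] at hx
  obtain ⟨h1, h2⟩ := hx
  have hx0 : 0 ≤ x := le_trans ha h1
  have hx4 : x ≤ 1/4 := le_trans h2 hb
  have hp := Real.pi_pos
  have hA : 0 ≤ 4 * Real.pi * h (1 - x) := by have := h_nonneg (1 - x); positivity
  have hA1 : 4 * Real.pi * h (1 - x) ≤ 1 := by
    have := h_le (1 - x)
    calc 4 * Real.pi * h (1 - x) ≤ 4 * Real.pi * (1 / (4 * Real.pi)) := by
          apply mul_le_mul_of_nonneg_left this (by positivity)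
      _ = 1 := by field_simp
  have h1x : (0:ℝ) < 1 - x := by linarith
  have h1x' : (0:ℝ) < 1 + x := by linarith
  have hB0 : 0 ≤ 1 / (1 - x) - 1 / (1 + x) := by
    have : 1 / (1 + x) ≤ 1 / (1 - x) := by
      apply one_div_le_one_div_of_le h1x (by linarith)
    linarith
  have hB : 1 / (1 - x) - 1 / (1 + x) ≤ 3 := by
    have e1 : 1 / (1 - x) ≤ 4 / 3 := by
      rw [div_le_div_iff₀ h1x (by norm_num)]; linarith
    have e2 : 0 ≤ 1 / (1 + x) := by positivity
    linarith
  show |4 * Real.pi * h (1 - x) * (1 / (1 - x) - 1 / (1 + x))| ≤ 3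
  rw [abs_of_nonneg (mul_nonneg hA hB0)]
  calc 4 * Real.pi * h (1 - x) * (1 / (1 - x) - 1 / (1 + x)) ≤ 1 * 3 := by
        apply mul_le_mul hA1 hB hB0 (by norm_num)
    _ = 3 := by norm_num

lemma h_sym {t : ℝ} (h0 : 0 ≤ t) (h4 : t ≤ 1/4) :
    h (1 + t) + h (1 - t) = 1 / (4 * Real.pi) := by
  rcases h4.lt_or_eq with hlt | rfl
  · have e1 : ¬ (1 + t ≤ 3/4) := by linarith
    have e2 : 1 + t < 5/4 := by linarith
    have e3 : ¬ (1 - t ≤ 3/4) := by linarith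
    have e4 : 1 - t < 5/4 := by linarith
    unfold h
    rw [if_neg e1, if_pos e2, if_neg e3, if_pos e4]
    have harg : (1 - t - 1) / ((1 - t - 1) ^ 2 - 1/16)
        = -((1 + t - 1) / ((1 + t - 1) ^ 2 - 1/16)) := by
      rw [neg_div']; ring_nf
    rw [harg, Real.exp_neg]
    set E := Real.exp ((1 + t - 1) / ((1 + t - 1) ^ 2 - 1/16)) with hE
    have hEpos : 0 < E := Real.exp_pos _
    have key : (1 + E)⁻¹ + (1 + E⁻¹)⁻¹ = 1 := by
      have h1 : (1 : ℝ) + E ≠ 0 := by positivity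
      have h2 : E ≠ 0 := ne_of_gt hEpos
      field_simp
      ring
    have hp : Real.pi ≠ 0 := Real.pi_ne_zero
    linear_combination (1 / (4 * Real.pi)) * key
  · unfold h
    norm_num

/-- For every `r ≥ 5/4`, `∫₀^r 4π · h(s)/s ds > log r`. -/
theorem integral_h_div_gt_log (r : ℝ) (hr : 5 / 4 ≤ r) :
    Real.log r < ∫ s in (0 : ℝ)..r, 4 * Real.pi * h s / s := by
  have hp := Real.pi_pos
  -- split the integral
  have hsplit : (∫ s in (0:ℝ)..r, 4 * Real.pi * h s / s)
      = (∫ s in (0:ℝ)..(5/4), 4 * Real.pi * h s / s)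
        + ∫ s in (5/4:ℝ)..r, 4 * Real.pi * h s / s :=
    (integral_add_adjacent_intervals (g_int _ _) (g_int _ _)).symm
  -- tail
  have htail : (∫ s in (5/4:ℝ)..r, 4 * Real.pi * h s / s) = Real.log r - Real.log (5/4) := by
    have hcg : Set.EqOn (fun s : ℝ => 4 * Real.pi * h s / s) (fun s : ℝ => s⁻¹)
        (Set.uIcc (5/4:ℝ) r) := by
      intro s hs
      rw [Set.uIcc_of_le hr] at hs
      have hs1 : (5/4:ℝ) ≤ s := hs.1
      have : h s = 1 / (4 * Real.pi) := by
        unfold h; rw [if_neg (by linarith), if_neg (by linarith)]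
      simp only [this]
      field_simp
    rw [integral_congr hcg, integral_inv (by
      rw [Set.uIcc_of_le hr]
      rintro ⟨h1, h2⟩
      linarith)]
    rw [Real.log_div (by linarith) (by norm_num)]
  -- head splits into three pieces
  have hhead : (∫ s in (0:ℝ)..(5/4), 4 * Real.pi * h s / s)
      = (∫ s in (0:ℝ)..(3/4), 4 * Real.pi * h s / s)
        + (∫ s in (3/4:ℝ)..1, 4 * Real.pi * h s / s)
        + ∫ s in (1:ℝ)..(5/4), 4 * Real.pi * h s / s := by
    rw [integral_add_adjacent_intervals (g_int _ _) (g_int _ _),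
      integral_add_adjacent_intervals (g_int _ _) (g_int _ _)]
  have hzero : (∫ s in (0:ℝ)..(3/4), 4 * Real.pi * h s / s) = 0 := by
    have hcg : Set.EqOn (fun s : ℝ => 4 * Real.pi * h s / s) (fun _ : ℝ => (0:ℝ))
        (Set.uIcc (0:ℝ) (3/4)) := by
      intro s hs
      rw [Set.uIcc_of_le (by norm_num)] at hs
      have : h s = 0 := by unfold h; rw [if_pos hs.2]
      simp [this]
    rw [integral_congr hcg]
    simp
  have hsub : (∫ s in (3/4:ℝ)..1, 4 * Real.pi * h s / s)
      = ∫ t in (0:ℝ)..(1/4), 4 * Real.pi * h (1 - t) / (1 - t) := by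
    have := intervalIntegral.integral_comp_sub_left (a := (0:ℝ)) (b := 1/4)
      (fun s : ℝ => 4 * Real.pi * h s / s) 1
    norm_num at this
    rw [← this]
  have hadd : (∫ s in (1:ℝ)..(5/4), 4 * Real.pi * h s / s)
      = ∫ t in (0:ℝ)..(1/4), 4 * Real.pi * h (1 + t) / (1 + t) := by
    have := intervalIntegral.integral_comp_add_left (a := (0:ℝ)) (b := 1/4)
      (fun s : ℝ => 4 * Real.pi * h s / s) 1
    norm_num at this
    rw [← this]
  -- combine the two reflected integrals
  have hcomb : (∫ t in (0:ℝ)..(1/4), 4 * Real.pi * h (1 - t) / (1 - t))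
      + (∫ t in (0:ℝ)..(1/4), 4 * Real.pi * h (1 + t) / (1 + t))
      = ∫ t in (0:ℝ)..(1/4),
          (4 * Real.pi * h (1 - t) / (1 - t) + 4 * Real.pi * h (1 + t) / (1 + t)) :=
    (integral_add (g_int_sub _ _) (g_int_add _ _)).symm
  -- pointwise identity
  have hpt : Set.EqOn
      (fun t : ℝ => 4 * Real.pi * h (1 - t) / (1 - t) + 4 * Real.pi * h (1 + t) / (1 + t))
      (fun t : ℝ => (1 + t)⁻¹ + F t) (Set.uIcc (0:ℝ) (1/4)) := by
    intro t ht
    rw [Set.uIcc_of_le (by norm_num)] at ht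
    obtain ⟨h0, h4⟩ := ht
    have hsym := h_sym h0 h4
    have e1 : (1:ℝ) - t ≠ 0 := by intro hc; rw [sub_eq_zero] at hc; norm_num [← hc] at h4
    have e2 : (1:ℝ) + t ≠ 0 := by positivity
    have hp0 : Real.pi ≠ 0 := Real.pi_ne_zero
    have hh : h (1 + t) = 1 / (4 * Real.pi) - h (1 - t) := by linarith
    simp only [F, hh]
    field_simp
    ring
  have hF : (∫ t in (0:ℝ)..(1/4),
      (4 * Real.pi * h (1 - t) / (1 - t) + 4 * Real.pi * h (1 + t) / (1 + t)))
      = (∫ t in (0:ℝ)..(1/4), (1 + t)⁻¹) + ∫ t in (0:ℝ)..(1/4), F t := by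
    rw [integral_congr hpt]
    exact integral_add
      (ContinuousOn.intervalIntegrable (by
        apply ContinuousOn.inv₀ (by fun_prop)
        intro x hx
        rw [Set.uIcc_of_le (by norm_num)] at hx
        have := hx.1; positivity))
      (intable F_meas (F_bdd le_rfl (by norm_num) le_rfl))
  have hlog : (∫ t in (0:ℝ)..(1/4), (1 + t)⁻¹) = Real.log (5/4) := by
    have := intervalIntegral.integral_comp_add_left (a := (0:ℝ)) (b := 1/4)
      (fun s : ℝ => s⁻¹) 1
    simp only [show (1:ℝ)+0 = 1 from by norm_num, show (1:ℝ)+1/4 = 5/4 from by norm_num] at this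
    rw [this, integral_inv (by
      rw [Set.uIcc_of_le (by norm_num)]
      rintro ⟨h1, h2⟩
      linarith)]
    norm_num
  -- the surplus is positive
  have hFpos : 0 < ∫ t in (0:ℝ)..(1/4), F t := by
    have hsplitF : (∫ t in (0:ℝ)..(1/4), F t)
        = (∫ t in (0:ℝ)..(1/8), F t) + (∫ t in (1/8:ℝ)..(3/16), F t)
          + ∫ t in (3/16:ℝ)..(1/4), F t := by
      rw [integral_add_adjacent_intervals
          (intable F_meas (F_bdd (by norm_num) (by norm_num) (by norm_num)))
          (intable F_meas (F_bdd (by norm_num) (by norm_num) (by norm_num))),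
        integral_add_adjacent_intervals
          (intable F_meas (F_bdd (by norm_num) (by norm_num) (by norm_num)))
          (intable F_meas (F_bdd (by norm_num) (by norm_num) (by norm_num)))]
    have Fnn : ∀ x, 0 ≤ x → x ≤ 1/4 → 0 ≤ F x := by
      intro x hx0 hx4
      have h1x : (0:ℝ) < 1 - x := by linarith
      have hB0 : 0 ≤ 1 / (1 - x) - 1 / (1 + x) := by
        have : 1 / (1 + x) ≤ 1 / (1 - x) := one_div_le_one_div_of_le h1x (by linarith)
        linarith
      have hA : 0 ≤ 4 * Real.pi * h (1 - x) := by have := h_nonneg (1 - x); positivity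
      exact mul_nonneg hA hB0
    have p1 : 0 ≤ ∫ t in (0:ℝ)..(1/8), F t :=
      integral_nonneg (by norm_num) (fun u hu => Fnn u hu.1 (by linarith [hu.2]))
    have p3 : 0 ≤ ∫ t in (3/16:ℝ)..(1/4), F t :=
      integral_nonneg (by norm_num) (fun u hu => Fnn u (by linarith [hu.1]) hu.2)
    have p2 : 0 < ∫ t in (1/8:ℝ)..(3/16), F t := by
      apply intervalIntegral_pos_of_pos_on
        (intable F_meas (F_bdd (by norm_num) (by norm_num) (by norm_num)))
      · intro x hx
        obtain ⟨hx1, hx2⟩ := hx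
        have hhx : 0 < h (1 - x) := by
          unfold h
          rw [if_neg (by linarith), if_pos (by linarith)]
          positivity
        have h1x : (0:ℝ) < 1 - x := by linarith
        have hB : 0 < 1 / (1 - x) - 1 / (1 + x) := by
          have : 1 / (1 + x) < 1 / (1 - x) := by
            apply one_div_lt_one_div_of_lt h1x (by linarith)
          linarith
        exact mul_pos (by positivity) hB
      · norm_num
    linarith
  rw [hsplit, htail, hhead, hzero, hsub, hadd]
  rw [zero_add, hcomb, hF, hlog]
  linarith
end

section
/- Let c ∈ (0, 1/2) be such that H_c(r) = log⁺ r for all r ∈ [0, ∞) ∖ (1/2, 3/2). Define τ : ℂ ∖ E → ℝ by τ(z) = H_c(|z|) + ∑_{j≥1} r_j · H_c(r_j/|z − a_j|); at each z at most one summand is nonzero (the j-th summand vanishes unless |z − a_j| < 2r_j, and the closed discs D̄(a_j, 2r_j) are pairwise disjoint), so the sum is well defined. Then τ is infinitely differentiable on the open set ℂ ∖ E, and its Laplacian is absolutely integrable: ∫_{ℂ∖E} |Δτ(z)| dλ(z) < ∞, where λ is the Lebesgue measure on ℂ ≅ ℝ². -/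
/-- `H c r = ∫₀^r 4π · h(s − c)/s ds` (the integrand vanishes for `s ≤ 3/4`,
so the integral is finite). -/
noncomputable def H (c r : ℝ) : ℝ := ∫ s in (0 : ℝ)..r, 4 * Real.pi * h (s - c) / s

/-- `log⁺ x = max (log x) 0`. -/
noncomputable def logPlus (x : ℝ) : ℝ := max (Real.log x) 0

/-- `τ(z) = H c |z| + ∑_j r j · H c (r j / |z − a j|)`. -/
noncomputable def tau (a : ℕ → ℂ) (r : ℕ → ℝ) (c : ℝ) (z : ℂ) : ℝ :=
  H c ‖z‖ + ∑' j, r j * H c (r j / ‖z - a j‖)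

lemma h_eq (r : ℝ) : h r = (1 / (4 * Real.pi)) * Real.smoothTransition (2 * r - 3 / 2) := by
  unfold h
  split_ifs with h1 h2
  · rw [Real.smoothTransition.zero_of_nonpos (by linarith), mul_zero]
  · push_neg at h1
    congr 1
    set x : ℝ := 2 * r - 3 / 2 with hx
    have hx0 : 0 < x := by simp [hx]; linarith
    have hx1 : x < 1 := by simp [hx]; linarith
    have h1x : 0 < 1 - x := by linarith
    clear_value x
    rw [Real.smoothTransition]
    rw [show expNegInvGlue x = Real.exp (-x⁻¹) by rw [expNegInvGlue, if_neg (not_le.2 hx0)]]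
    rw [show expNegInvGlue (1 - x) = Real.exp (-(1-x)⁻¹) by
      rw [expNegInvGlue, if_neg (not_le.2 h1x)]]
    have hden : (r - 1) ^ 2 - 1 / 16 ≠ 0 := by nlinarith
    have hq : (r - 1) / ((r - 1) ^ 2 - 1 / 16) = x⁻¹ - (1-x)⁻¹ := by
      rw [inv_sub_inv hx0.ne' h1x.ne', div_eq_div_iff hden (by positivity), hx]
      ring
    rw [eq_div_iff (by positivity), Real.exp_neg x⁻¹, Real.exp_neg (1-x)⁻¹, hq, Real.exp_sub]
    have e1 := Real.exp_pos x⁻¹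
    have e2 := Real.exp_pos (1-x)⁻¹
    set A := Real.exp x⁻¹ with hA
    set B := Real.exp (1 - x)⁻¹ with hB
    clear_value A B
    clear hA hB hq hden
    field_simp
  · rw [Real.smoothTransition.one_of_one_le (by linarith), mul_one]

lemma contDiff_h : ContDiff ℝ (⊤ : ℕ∞) h := by
  have : h = fun r => (1 / (4 * Real.pi)) * Real.smoothTransition (2 * r - 3 / 2) :=
    funext h_eq
  rw [this]
  exact contDiff_const.mul
    (Real.smoothTransition.contDiff.comp ((contDiff_const.mul contDiff_id).sub contDiff_const))

lemma h_zero {r : ℝ} (hr : r ≤ 3 / 4) : h r = 0 := by rw [h, if_pos hr]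




/-- The integrand of `H`. -/
noncomputable def gg (c : ℝ) : ℝ → ℝ := fun s => 4 * Real.pi * h (s - c) / s

lemma gg_zero {c s : ℝ} (hc : 0 < c) (hs : s ≤ 3 / 4) : gg c s = 0 := by
  rw [gg, h_zero (by linarith), mul_zero, zero_div]

lemma contDiff_gg {c : ℝ} (hc : 0 < c) : ContDiff ℝ (⊤ : ℕ∞) (gg c) := by
  rw [contDiff_iff_contDiffAt]
  intro s
  rcases le_or_gt s (3 / 4) with hs | hs
  · have : gg c =ᶠ[nhds s] (fun _ => (0:ℝ)) := by
      have : ∀ t ∈ Set.Iio (3 / 4 + c), gg c t = 0 := by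
        intro t ht
        rw [gg, h_zero (by simp only [Set.mem_Iio] at ht; linarith), mul_zero, zero_div]
      exact Filter.eventually_of_mem (Iio_mem_nhds (by linarith)) this
    exact ContDiffAt.congr_of_eventuallyEq contDiffAt_const this
  · have hs0 : (0 : ℝ) < s := by linarith
    exact ((contDiff_const.mul (contDiff_h.comp (contDiff_id.sub contDiff_const))).contDiffAt).div
      contDiffAt_id (ne_of_gt hs0)

lemma H_hasDerivAt {c : ℝ} (hc : 0 < c) (x : ℝ) : HasDerivAt (H c) (gg c x) x := by
  have hcont : Continuous (gg c) := (contDiff_gg hc).continuous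
  exact intervalIntegral.integral_hasDerivAt_right
    (hcont.intervalIntegrable _ _)
    (hcont.stronglyMeasurableAtFilter _ _)
    hcont.continuousAt

lemma contDiff_H {c : ℝ} (hc : 0 < c) : ContDiff ℝ (⊤ : ℕ∞) (H c) := by
  rw [contDiff_infty_iff_deriv]
  refine ⟨fun x => (H_hasDerivAt hc x).differentiableAt, ?_⟩
  have : deriv (H c) = gg c := funext fun x => (H_hasDerivAt hc x).deriv
  rw [this]
  exact contDiff_gg hc

lemma H_zero {c x : ℝ} (hc : 0 < c) (hx : x ≤ 3 / 4) : H c x = 0 := by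
  rw [H]
  rw [show (0:ℝ) = ((0:ℝ)) from rfl]
  have : ∀ s ∈ Set.uIcc (0:ℝ) x, gg c s = 0 := by
    intro s hs
    rcases le_total (0:ℝ) x with h0 | h0
    · rw [Set.uIcc_of_le h0] at hs
      exact gg_zero hc (le_trans hs.2 hx)
    · rw [Set.uIcc_of_ge h0] at hs
      exact gg_zero hc (le_trans hs.2 (by linarith))
  calc (∫ s in (0:ℝ)..x, 4 * Real.pi * h (s - c) / s) = ∫ s in (0:ℝ)..x, (0:ℝ) := by
        apply intervalIntegral.integral_congr
        intro s hs
        exact this s hs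
    _ = 0 := intervalIntegral.integral_zero

open Complex Filter MeasureTheory

/-- Second-derivative "Laplacian" via iterated `fderiv`. -/
noncomputable def Lap (u : ℂ → ℝ) (z : ℂ) : ℝ :=
  fderiv ℝ (fderiv ℝ u) z 1 1 + fderiv ℝ (fderiv ℝ u) z Complex.I Complex.I

/-- The Laplacian expression from the statement. -/
noncomputable def De (u : ℂ → ℝ) (z : ℂ) : ℝ :=
  deriv (fun x : ℝ => deriv (fun x' : ℝ => u ((x' : ℂ) + (z.im : ℂ) * Complex.I)) x) z.re +
  deriv (fun y : ℝ => deriv (fun y' : ℝ => u ((z.re : ℂ) + (y' : ℂ) * Complex.I)) y) z.im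

lemma hasDerivAt_sliceX {u : ℂ → ℝ} (b x : ℝ)
    (hu : DifferentiableAt ℝ u ((x : ℂ) + (b : ℂ) * Complex.I)) :
    HasDerivAt (fun x' : ℝ => u ((x' : ℂ) + (b : ℂ) * Complex.I))
      (fderiv ℝ u ((x : ℂ) + (b : ℂ) * Complex.I) 1) x := by
  have hline : HasDerivAt (fun x' : ℝ => ((x' : ℂ) + (b : ℂ) * Complex.I)) 1 x := by
    simpa using (Complex.ofRealCLM.hasDerivAt (x := x)).add_const ((b : ℂ) * Complex.I)
  exact hu.hasFDerivAt.comp_hasDerivAt x hline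

lemma hasDerivAt_sliceY {u : ℂ → ℝ} (a y : ℝ)
    (hu : DifferentiableAt ℝ u ((a : ℂ) + (y : ℂ) * Complex.I)) :
    HasDerivAt (fun y' : ℝ => u ((a : ℂ) + (y' : ℂ) * Complex.I))
      (fderiv ℝ u ((a : ℂ) + (y : ℂ) * Complex.I) Complex.I) y := by
  have hline : HasDerivAt (fun y' : ℝ => ((a : ℂ) + (y' : ℂ) * Complex.I)) Complex.I y := by
    simpa using ((Complex.ofRealCLM.hasDerivAt (x := y)).mul_const Complex.I).const_add (a : ℂ)
  exact hu.hasFDerivAt.comp_hasDerivAt y hline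

lemma De_eq_Lap {u : ℂ → ℝ} {U : Set ℂ} (hU : IsOpen U) (hu : ContDiffOn ℝ 2 u U)
    {z : ℂ} (hz : z ∈ U) : De u z = Lap u z := by
  have hd1 : DifferentiableOn ℝ u U := hu.differentiableOn two_ne_zero
  have hder : ContDiffOn ℝ 1 (fderiv ℝ u) U := hu.fderiv_of_isOpen hU (by norm_num)
  have hd2 : DifferentiableOn ℝ (fderiv ℝ u) U := hder.differentiableOn one_ne_zero
  have hz' : (z.re : ℂ) + (z.im : ℂ) * Complex.I = z := Complex.re_add_im z
  -- X part
  have hx : deriv (fun x : ℝ => deriv (fun x' : ℝ => u ((x' : ℂ) + (z.im : ℂ) * Complex.I)) x) z.re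
      = fderiv ℝ (fderiv ℝ u) z 1 1 := by
    have hS : IsOpen {x : ℝ | ((x : ℂ) + (z.im : ℂ) * Complex.I) ∈ U} :=
      hU.preimage (by continuity)
    have hzS : z.re ∈ {x : ℝ | ((x : ℂ) + (z.im : ℂ) * Complex.I) ∈ U} := by
      simp only [Set.mem_setOf_eq, hz']; exact hz
    have E1 : (fun x : ℝ => deriv (fun x' : ℝ => u ((x' : ℂ) + (z.im : ℂ) * Complex.I)) x)
        =ᶠ[nhds z.re]
        (fun x : ℝ => fderiv ℝ u ((x : ℂ) + (z.im : ℂ) * Complex.I) 1) := by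
      filter_upwards [hS.mem_nhds hzS] with x hxS
      exact (hasDerivAt_sliceX z.im x (hd1.differentiableAt (hU.mem_nhds hxS))).deriv
    rw [E1.deriv_eq]
    have hG : HasFDerivAt (fun w : ℂ => fderiv ℝ u w 1)
        ((ContinuousLinearMap.apply ℝ ℝ (1 : ℂ)).comp (fderiv ℝ (fderiv ℝ u) z)) z :=
      (ContinuousLinearMap.apply ℝ ℝ (1 : ℂ)).hasFDerivAt.comp z
        (hd2.differentiableAt (hU.mem_nhds hz)).hasFDerivAt
    have := hasDerivAt_sliceX (u := fun w : ℂ => fderiv ℝ u w 1) z.im z.re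
      (by rw [hz']; exact hG.differentiableAt)
    rw [hz'] at this
    rw [this.deriv, hG.fderiv]
    rfl
  -- Y part
  have hy : deriv (fun y : ℝ => deriv (fun y' : ℝ => u ((z.re : ℂ) + (y' : ℂ) * Complex.I)) y) z.im
      = fderiv ℝ (fderiv ℝ u) z Complex.I Complex.I := by
    have hS : IsOpen {y : ℝ | ((z.re : ℂ) + (y : ℂ) * Complex.I) ∈ U} :=
      hU.preimage (by continuity)
    have hzS : z.im ∈ {y : ℝ | ((z.re : ℂ) + (y : ℂ) * Complex.I) ∈ U} := by
      simp only [Set.mem_setOf_eq, hz']; exact hz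
    have E1 : (fun y : ℝ => deriv (fun y' : ℝ => u ((z.re : ℂ) + (y' : ℂ) * Complex.I)) y)
        =ᶠ[nhds z.im]
        (fun y : ℝ => fderiv ℝ u ((z.re : ℂ) + (y : ℂ) * Complex.I) Complex.I) := by
      filter_upwards [hS.mem_nhds hzS] with y hyS
      exact (hasDerivAt_sliceY z.re y (hd1.differentiableAt (hU.mem_nhds hyS))).deriv
    rw [E1.deriv_eq]
    have hG : HasFDerivAt (fun w : ℂ => fderiv ℝ u w Complex.I)
        ((ContinuousLinearMap.apply ℝ ℝ (Complex.I)).comp (fderiv ℝ (fderiv ℝ u) z)) z :=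
      (ContinuousLinearMap.apply ℝ ℝ (Complex.I)).hasFDerivAt.comp z
        (hd2.differentiableAt (hU.mem_nhds hz)).hasFDerivAt
    have := hasDerivAt_sliceY (u := fun w : ℂ => fderiv ℝ u w Complex.I) z.re z.im
      (by rw [hz']; exact hG.differentiableAt)
    rw [hz'] at this
    rw [this.deriv, hG.fderiv]
    rfl
  rw [De, hx, hy, Lap]

lemma Lap_contOn {u : ℂ → ℝ} {U : Set ℂ} (hU : IsOpen U) (hu : ContDiffOn ℝ 2 u U) :
    ContinuousOn (Lap u) U := by
  have h2 : ContDiffOn ℝ 1 (fderiv ℝ u) U := hu.fderiv_of_isOpen hU (by norm_num)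
  have h3 : ContinuousOn (fderiv ℝ (fderiv ℝ u)) U :=
    (h2.fderiv_of_isOpen (m := 0) hU (by norm_num)).continuousOn
  exact ((h3.clm_apply continuousOn_const).clm_apply continuousOn_const).add
    ((h3.clm_apply continuousOn_const).clm_apply continuousOn_const)

lemma De_congr {u v : ℂ → ℝ} {z : ℂ} (huv : u =ᶠ[nhds z] v) : De u z = De v z := by
  rcases mem_nhds_iff.mp huv with ⟨t, hts, hto, hzt⟩
  have hz' : (z.re : ℂ) + (z.im : ℂ) * Complex.I = z := Complex.re_add_im z
  have hx : deriv (fun x : ℝ => deriv (fun x' : ℝ => u ((x' : ℂ) + (z.im : ℂ) * Complex.I)) x) z.re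
      = deriv (fun x : ℝ => deriv (fun x' : ℝ => v ((x' : ℂ) + (z.im : ℂ) * Complex.I)) x) z.re := by
    have hS : IsOpen {x : ℝ | ((x : ℂ) + (z.im : ℂ) * Complex.I) ∈ t} := hto.preimage (by continuity)
    have hzS : z.re ∈ {x : ℝ | ((x : ℂ) + (z.im : ℂ) * Complex.I) ∈ t} := by
      simp only [Set.mem_setOf_eq, hz']; exact hzt
    have E : (fun x : ℝ => deriv (fun x' : ℝ => u ((x' : ℂ) + (z.im : ℂ) * Complex.I)) x)
        =ᶠ[nhds z.re] (fun x : ℝ => deriv (fun x' : ℝ => v ((x' : ℂ) + (z.im : ℂ) * Complex.I)) x) := by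
      filter_upwards [hS.mem_nhds hzS] with x hxS
      apply Filter.EventuallyEq.deriv_eq
      filter_upwards [hS.mem_nhds hxS] with x' hx'S
      exact hts hx'S
    exact E.deriv_eq
  have hy : deriv (fun y : ℝ => deriv (fun y' : ℝ => u ((z.re : ℂ) + (y' : ℂ) * Complex.I)) y) z.im
      = deriv (fun y : ℝ => deriv (fun y' : ℝ => v ((z.re : ℂ) + (y' : ℂ) * Complex.I)) y) z.im := by
    have hS : IsOpen {y : ℝ | ((z.re : ℂ) + (y : ℂ) * Complex.I) ∈ t} := hto.preimage (by continuity)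
    have hzS : z.im ∈ {y : ℝ | ((z.re : ℂ) + (y : ℂ) * Complex.I) ∈ t} := by
      simp only [Set.mem_setOf_eq, hz']; exact hzt
    have E : (fun y : ℝ => deriv (fun y' : ℝ => u ((z.re : ℂ) + (y' : ℂ) * Complex.I)) y)
        =ᶠ[nhds z.im] (fun y : ℝ => deriv (fun y' : ℝ => v ((z.re : ℂ) + (y' : ℂ) * Complex.I)) y) := by
      filter_upwards [hS.mem_nhds hzS] with y hyS
      apply Filter.EventuallyEq.deriv_eq
      filter_upwards [hS.mem_nhds hyS] with y' hy'S
      exact hts hy'S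
    exact E.deriv_eq
  rw [De, De, hx, hy]

lemma De_const (k : ℝ) (z : ℂ) : De (fun _ => k) z = 0 := by
  simp [De]

lemma contDiffAt_nhds {u : ℂ → ℝ} {z : ℂ} (hu : ContDiffAt ℝ 2 u z) :
    ∃ U : Set ℂ, IsOpen U ∧ z ∈ U ∧ ContDiffOn ℝ 2 u U := by
  rcases hu.contDiffOn le_rfl (by simp) with ⟨U, hU, h⟩
  rcases mem_nhds_iff.mp hU with ⟨t, hts, hto, hzt⟩
  exact ⟨t, hto, hzt, (h.mono hts)⟩

lemma Lap_add {u v : ℂ → ℝ} {U : Set ℂ} (hU : IsOpen U) (hu : ContDiffOn ℝ 2 u U)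
    (hv : ContDiffOn ℝ 2 v U) {z : ℂ} (hz : z ∈ U) :
    Lap (fun w => u w + v w) z = Lap u z + Lap v z := by
  have hud : DifferentiableOn ℝ u U := hu.differentiableOn two_ne_zero
  have hvd : DifferentiableOn ℝ v U := hv.differentiableOn two_ne_zero
  have hu2 : DifferentiableAt ℝ (fderiv ℝ u) z :=
    ((hu.fderiv_of_isOpen (m := 1) hU (by norm_num)).differentiableOn one_ne_zero).differentiableAt
      (hU.mem_nhds hz)
  have hv2 : DifferentiableAt ℝ (fderiv ℝ v) z :=
    ((hv.fderiv_of_isOpen (m := 1) hU (by norm_num)).differentiableOn one_ne_zero).differentiableAt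
      (hU.mem_nhds hz)
  have E : fderiv ℝ (fun w => u w + v w) =ᶠ[nhds z] fun w => fderiv ℝ u w + fderiv ℝ v w := by
    filter_upwards [hU.mem_nhds hz] with w hw
    exact fderiv_add (hud.differentiableAt (hU.mem_nhds hw))
      (hvd.differentiableAt (hU.mem_nhds hw))
  have h2 : fderiv ℝ (fderiv ℝ (fun w => u w + v w)) z
      = fderiv ℝ (fderiv ℝ u) z + fderiv ℝ (fderiv ℝ v) z := by
    rw [E.fderiv_eq]
    exact fderiv_add hu2 hv2
  simp only [Lap, h2, ContinuousLinearMap.add_apply]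
  ring

lemma De_add {u v : ℂ → ℝ} {z : ℂ} (hu : ContDiffAt ℝ 2 u z) (hv : ContDiffAt ℝ 2 v z) :
    De (fun w => u w + v w) z = De u z + De v z := by
  rcases contDiffAt_nhds hu with ⟨U, hUo, hzU, hUc⟩
  rcases contDiffAt_nhds hv with ⟨V, hVo, hzV, hVc⟩
  have hW : IsOpen (U ∩ V) := hUo.inter hVo
  have hzW : z ∈ U ∩ V := ⟨hzU, hzV⟩
  have hu' : ContDiffOn ℝ 2 u (U ∩ V) := hUc.mono Set.inter_subset_left
  have hv' : ContDiffOn ℝ 2 v (U ∩ V) := hVc.mono Set.inter_subset_right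
  rw [De_eq_Lap hW (hu'.add hv') hzW, De_eq_Lap hW hu' hzW, De_eq_Lap hW hv' hzW]
  exact Lap_add hW hu' hv' hzW

lemma De_sum {S : Finset ℕ} {f : ℕ → ℂ → ℝ} {z : ℂ}
    (hf : ∀ j ∈ S, ContDiffAt ℝ 2 (f j) z) :
    De (fun w => ∑ j ∈ S, f j w) z = ∑ j ∈ S, De (f j) z := by
  induction S using Finset.cons_induction with
  | empty => simpa using De_const 0 z
  | cons j S hj ih =>
    simp only [Finset.sum_cons]
    rw [De_add (hf j (Finset.mem_cons_self j S))
      (ContDiffAt.sum fun i hi => hf i (Finset.mem_cons_of_mem hi)), ih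
      (fun i hi => hf i (Finset.mem_cons_of_mem hi))]

lemma De_affine {F : ℂ → ℝ} {V : Set ℂ} (hV : IsOpen V) (hF : ContDiffOn ℝ 2 F V)
    (p σ : ℝ) (b z : ℂ) (hz : σ • z + b ∈ V) :
    De (fun w => p * F (σ • w + b)) z = p * σ ^ 2 * De F (σ • z + b) := by
  set A : ℂ → ℂ := fun w => σ • w + b with hAdef
  set Al : ℂ →L[ℝ] ℂ := σ • ContinuousLinearMap.id ℝ ℂ with hAl
  have hA : ∀ w, HasFDerivAt A Al w := fun w => ((hasFDerivAt_id w).const_smul σ).add_const b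
  have hAcont : Continuous A := by continuity
  have hUo : IsOpen (A ⁻¹' V) := hV.preimage hAcont
  have hzU : z ∈ A ⁻¹' V := hz
  have hcomp : ContDiffOn ℝ 2 (fun w => p * F (A w)) (A ⁻¹' V) := by
    refine ContDiffOn.mul contDiffOn_const ?_
    have haff : ContDiff ℝ 2 A := by
      have : ContDiff ℝ 2 (fun w : ℂ => σ • w) := contDiff_id.const_smul σ
      exact this.add contDiff_const
    exact hF.comp haff.contDiffOn (fun w hw => hw)
  rw [De_eq_Lap hUo hcomp hzU, De_eq_Lap hV hF hz]
  -- now compute Lap of the composition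
  have hFd : DifferentiableOn ℝ F V := hF.differentiableOn two_ne_zero
  have hD2 : DifferentiableAt ℝ (fderiv ℝ F) (A z) :=
    ((hF.fderiv_of_isOpen (m := 1) hV (by norm_num)).differentiableOn one_ne_zero).differentiableAt
      (hV.mem_nhds hz)
  set Ψ : (ℂ →L[ℝ] ℝ) →L[ℝ] (ℂ →L[ℝ] ℝ) :=
    p • ((ContinuousLinearMap.compL ℝ ℂ ℂ ℝ).flip Al) with hPsi
  have key : fderiv ℝ (fun w => p * F (A w)) =ᶠ[nhds z]
      fun w => Ψ (fderiv ℝ F (A w)) := by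
    filter_upwards [hUo.mem_nhds hzU] with w hw
    have h1 : HasFDerivAt F (fderiv ℝ F (A w)) (A w) :=
      (hFd.differentiableAt (hV.mem_nhds hw)).hasFDerivAt
    have h2 := (h1.comp w (hA w)).const_mul p
    have h3 : fderiv ℝ (fun w => p * F (A w)) w = p • (fderiv ℝ F (A w)).comp Al :=
      HasFDerivAt.fderiv (by exact h2)
    rw [h3]
    simp [hPsi, ContinuousLinearMap.smul_apply]
  have hchain : HasFDerivAt (fun w => Ψ (fderiv ℝ F (A w)))
      (Ψ.comp ((fderiv ℝ (fderiv ℝ F) (A z)).comp Al)) z :=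
    Ψ.hasFDerivAt.comp z (hD2.hasFDerivAt.comp z (hA z))
  have h2 : fderiv ℝ (fderiv ℝ (fun w => p * F (A w))) z
      = Ψ.comp ((fderiv ℝ (fderiv ℝ F) (A z)).comp Al) := by
    rw [key.fderiv_eq]
    exact hchain.fderiv
  have hval : ∀ v : ℂ, (Ψ.comp ((fderiv ℝ (fderiv ℝ F) (A z)).comp Al)) v v
      = p * (σ * (σ * (fderiv ℝ (fderiv ℝ F) (A z) v v))) := by
    intro v
    simp [hPsi, hAl, ContinuousLinearMap.smul_apply, ContinuousLinearMap.map_smul, smul_eq_mul]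
    ring
  simp only [Lap, h2, hval]
  ring

lemma deriv2_logpoly (b x : ℝ) (hx : x ^ 2 + b ^ 2 ≠ 0) :
    deriv (fun t : ℝ => deriv (fun s : ℝ => Real.log (s ^ 2 + b ^ 2) / 2) t) x
      = (b ^ 2 - x ^ 2) / (x ^ 2 + b ^ 2) ^ 2 := by
  have hS : IsOpen {t : ℝ | t ^ 2 + b ^ 2 ≠ 0} := isOpen_ne.preimage (by continuity)
  have hxS : x ∈ {t : ℝ | t ^ 2 + b ^ 2 ≠ 0} := hx
  have E : (fun t : ℝ => deriv (fun s : ℝ => Real.log (s ^ 2 + b ^ 2) / 2) t)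
      =ᶠ[nhds x] fun t : ℝ => t / (t ^ 2 + b ^ 2) := by
    filter_upwards [hS.mem_nhds hxS] with t ht
    have h1 : HasDerivAt (fun s : ℝ => s ^ 2 + b ^ 2) (2 * t) t := by
      simpa using (hasDerivAt_pow 2 t).add_const (b ^ 2)
    have h2 := (h1.log ht).div_const 2
    rw [h2.deriv]
    field_simp
  rw [E.deriv_eq]
  have h1 : HasDerivAt (fun t : ℝ => t ^ 2 + b ^ 2) (2 * x) x := by
    simpa using (hasDerivAt_pow 2 x).add_const (b ^ 2)
  have h3 := (hasDerivAt_id x).div h1 hx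
  have h4 : deriv (fun t : ℝ => t / (t ^ 2 + b ^ 2)) x
      = (1 * (x ^ 2 + b ^ 2) - id x * (2 * x)) / ((x ^ 2 + b ^ 2) ^ 2) :=
    HasDerivAt.deriv (by exact h3)
  rw [h4]
  simp only [id]
  field_simp
  ring

lemma De_log {z : ℂ} (hz : z ≠ 0) :
    De (fun w => Real.log (‖w‖)) z = 0 := by
  have hD : z.re ^ 2 + z.im ^ 2 ≠ 0 := by
    have := Complex.normSq_pos.mpr hz
    rw [Complex.normSq_apply] at this
    nlinarith
  have habs : ∀ x y : ℝ, Real.log (‖(x : ℂ) + (y : ℂ) * Complex.I‖)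
      = Real.log (x ^ 2 + y ^ 2) / 2 := by
    intro x y
    rw [Complex.norm_add_mul_I, Real.log_sqrt (by positivity)]
  have hx : (fun x : ℝ => deriv (fun x' : ℝ =>
        Real.log (‖(x' : ℂ) + (z.im : ℂ) * Complex.I‖)) x)
      = fun x : ℝ => deriv (fun x' : ℝ => Real.log (x' ^ 2 + z.im ^ 2) / 2) x := by
    funext x
    congr 1
    funext x'
    exact habs x' z.im
  have hy : (fun y : ℝ => deriv (fun y' : ℝ =>
        Real.log (‖(z.re : ℂ) + (y' : ℂ) * Complex.I‖)) y)
      = fun y : ℝ => deriv (fun y' : ℝ => Real.log (y' ^ 2 + z.re ^ 2) / 2) y := by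
    funext y
    congr 1
    funext y'
    rw [habs z.re y', add_comm (z.re ^ 2)]
  rw [De, hx, hy, deriv2_logpoly z.im z.re hD,
    deriv2_logpoly z.re z.im (by rw [add_comm] at hD; exact hD)]
  rw [show z.im ^ 2 + z.re ^ 2 = z.re ^ 2 + z.im ^ 2 from add_comm _ _, ← add_div,
    show z.im ^ 2 - z.re ^ 2 + (z.re ^ 2 - z.im ^ 2) = 0 by ring, zero_div]

noncomputable def Phi (c : ℝ) : ℂ → ℝ := fun w => H c (‖w‖)

noncomputable def Fc (c : ℝ) : ℂ → ℝ := fun w => H c (‖w‖)⁻¹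

noncomputable def term (a : ℕ → ℂ) (r : ℕ → ℝ) (c : ℝ) (j : ℕ) (z : ℂ) : ℝ :=
  r j * H c (r j / ‖z - a j‖)

lemma contDiffAt_cabs {w : ℂ} (hw : w ≠ 0) :
    ContDiffAt ℝ (⊤ : ℕ∞) (fun z : ℂ => ‖z‖) w := by
  exact contDiffAt_norm (𝕜 := ℂ) (E := ℂ) (n := (⊤ : ℕ∞)) hw

lemma contDiffAt_Phi {c : ℝ} (hc : 0 < c) (w : ℂ) : ContDiffAt ℝ (⊤ : ℕ∞) (Phi c) w := by
  rcases lt_or_ge (‖w‖) (3 / 4) with hw | hw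
  · have hO : IsOpen {v : ℂ | ‖v‖ < 3 / 4} :=
      isOpen_lt (by continuity) continuous_const
    refine ContDiffAt.congr_of_eventuallyEq (contDiffAt_const (c := (0:ℝ))) ?_
    filter_upwards [hO.mem_nhds hw] with v hv
    exact H_zero hc (le_of_lt hv)
  · have hw0 : w ≠ 0 := by
      intro h
      rw [h] at hw
      simp at hw
      linarith
    exact ((contDiff_H hc).contDiffAt).comp w (contDiffAt_cabs hw0)

lemma contDiffAt_Fc {c : ℝ} (hc : 0 < c) {w : ℂ} (hw : w ≠ 0) :
    ContDiffAt ℝ (⊤ : ℕ∞) (Fc c) w :=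
  ((contDiff_H hc).contDiffAt).comp w
    ((contDiffAt_cabs hw).inv (norm_ne_zero_iff.mpr hw))

lemma Fc_zero {c : ℝ} (hc : 0 < c) {w : ℂ} (hw : 4 / 3 ≤ ‖w‖) : Fc c w = 0 := by
  apply H_zero hc
  have h0 : (0:ℝ) < 4 / 3 := by norm_num
  calc (‖w‖)⁻¹ ≤ (4 / 3 : ℝ)⁻¹ := by
        apply inv_anti₀ h0 hw
    _ ≤ 3 / 4 := by norm_num

lemma term_eq_affine {a : ℕ → ℂ} {r : ℕ → ℝ} {c : ℝ} {j : ℕ} (hrj : 0 < r j) :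
    term a r c j = fun z => r j * Fc c ((r j)⁻¹ • z + (-((r j)⁻¹ • a j))) := by
  funext z
  have h1 : (r j)⁻¹ • z + (-((r j)⁻¹ • a j)) = (r j)⁻¹ • (z - a j) := by
    rw [smul_sub]; ring
  rw [h1, term, Fc]
  congr 2
  have h2 : ‖(r j)⁻¹ • (z - a j)‖ = (r j)⁻¹ * ‖z - a j‖ := by
    rw [Complex.real_smul, norm_mul, Complex.norm_real, Real.norm_eq_abs, abs_of_pos (inv_pos.mpr hrj)]
  rw [h2, mul_inv, inv_inv, div_eq_mul_inv]

lemma term_zero {a : ℕ → ℂ} {r : ℕ → ℝ} {c : ℝ} {j : ℕ} {z : ℂ} (hc : 0 < c) (hrj : 0 < r j)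
    (hd : 4 / 3 * r j ≤ ‖z - a j‖) : term a r c j z = 0 := by
  have hdpos : 0 < ‖z - a j‖ := lt_of_lt_of_le (by positivity) hd
  rw [term, H_zero hc, mul_zero]
  rw [div_le_iff₀ hdpos]
  nlinarith

lemma contDiffAt_term {a : ℕ → ℂ} {r : ℕ → ℝ} {c : ℝ} {j : ℕ} {z : ℂ}
    (hc : 0 < c) (hrj : 0 < r j) (hz : z ≠ a j) :
    ContDiffAt ℝ (⊤ : ℕ∞) (term a r c j) z := by
  rw [term_eq_affine hrj]
  have h0 : (r j)⁻¹ • z + (-((r j)⁻¹ • a j)) ≠ 0 := by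
    rw [show (r j)⁻¹ • z + (-((r j)⁻¹ • a j)) = (r j)⁻¹ • (z - a j) by rw [smul_sub]; ring]
    exact smul_ne_zero (inv_ne_zero hrj.ne') (sub_ne_zero.mpr hz)
  have haff : ContDiffAt ℝ (⊤ : ℕ∞) (fun z : ℂ => (r j)⁻¹ • z + (-((r j)⁻¹ • a j))) z :=
    (contDiffAt_id.const_smul _).add contDiffAt_const
  exact contDiffAt_const.mul (ContDiffAt.comp (g := Fc c) z (contDiffAt_Fc hc h0) haff)

/-- Let `c ∈ (0, 1/2)` be such that `H c = log⁺` on `[0, ∞) ∖ (1/2, 3/2)`.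
Then `τ(z) = H c |z| + ∑_j r j · H c (r j/|z − a j|)` is infinitely differentiable on the
open set `ℂ ∖ E`, and its Laplacian `Δτ = ∂²τ/∂x² + ∂²τ/∂y²` (identifying `ℂ` with `ℝ²`)
is absolutely integrable: `∫_{ℂ∖E} |Δτ| dλ < ∞` with `λ` the Lebesgue measure on `ℂ`. -/
theorem tau_smooth_and_laplacian_integrable
    (a : ℕ → ℂ) (r : ℕ → ℝ)
    (ha : Function.Injective a)
    (ha' : Filter.Tendsto (fun j => ‖a j‖) Filter.atTop Filter.atTop)
    (hr : ∀ j, r j ∈ Set.Ioo (0 : ℝ) 1)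
    (hdisj : Pairwise fun i j =>
      Disjoint (Metric.closedBall (a i) (2 * r i)) (Metric.closedBall (a j) (2 * r j)))
    (hsum : Summable r)
    (c : ℝ) (hc : c ∈ Set.Ioo (0 : ℝ) (1 / 2))
    (hH : ∀ x : ℝ, 0 ≤ x → x ∉ Set.Ioo (1 / 2 : ℝ) (3 / 2) → H c x = logPlus x) :
    ContDiffOn ℝ (⊤ : ℕ∞) (tau a r c) (Set.range a)ᶜ ∧
    ∫⁻ z in (Set.range a)ᶜ,
      ENNReal.ofReal
        |deriv (fun x : ℝ => deriv (fun x' : ℝ =>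
            tau a r c ((x' : ℂ) + (z.im : ℂ) * Complex.I)) x) z.re +
         deriv (fun y : ℝ => deriv (fun y' : ℝ =>
            tau a r c ((z.re : ℂ) + (y' : ℂ) * Complex.I)) y) z.im| < ⊤ := by
  obtain ⟨hc0, hc2⟩ := hc
  have hrpos : ∀ j, 0 < r j := fun j => (hr j).1
  have hrlt : ∀ j, r j < 1 := fun j => (hr j).2
  have htau : ∀ w : ℂ, tau a r c w = Phi c w + ∑' j, term a r c j w := fun w => rfl
  -- local structure: near every point, `tau` is a finite sum
  have hlocal : ∀ z : ℂ, ∃ N : ℕ,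
      tau a r c =ᶠ[nhds z] (fun w => Phi c w + ∑ j ∈ Finset.range N, term a r c j w) := by
    intro z
    obtain ⟨N, hN⟩ := Filter.eventually_atTop.mp (ha'.eventually_gt_atTop (‖z‖ + 3))
    refine ⟨N, ?_⟩
    filter_upwards [Metric.ball_mem_nhds z one_pos] with w hw
    rw [htau w]
    congr 1
    apply tsum_eq_sum
    intro j hj
    have hjN : N ≤ j := by
      by_contra hlt
      exact hj (Finset.mem_range.mpr (Nat.lt_of_not_le hlt))
    have hdist : ‖w - z‖ < 1 := by rwa [Metric.mem_ball, Complex.dist_eq] at hw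
    have h1 : ‖z‖ + 3 < ‖a j‖ := hN j hjN
    have h2 : ‖w‖ ≤ ‖z‖ + 1 := by
      calc ‖w‖ = ‖z + (w - z)‖ := by ring_nf
        _ ≤ ‖z‖ + ‖w - z‖ := norm_add_le _ _
        _ ≤ ‖z‖ + 1 := by linarith
    have h4 : ‖a j‖ - ‖w‖ ≤ ‖w - a j‖ := by
      have := norm_sub_norm_le (a j) w
      rw [show ‖w - a j‖ = ‖a j - w‖ from norm_sub_rev _ _]
      linarith
    apply term_zero hc0 (hrpos j)
    have h5 : 4 / 3 * r j < 2 := by nlinarith [hrpos j, hrlt j]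
    linarith
  have hzne : ∀ z : ℂ, z ∈ (Set.range a)ᶜ → ∀ j, z ≠ a j := by
    intro z hz j h
    exact hz ⟨j, h.symm⟩
  have hsmoothAt : ∀ z ∈ (Set.range a)ᶜ, ContDiffAt ℝ (⊤ : ℕ∞) (tau a r c) z := by
    intro z hz
    obtain ⟨N, hE⟩ := hlocal z
    exact ContDiffAt.congr_of_eventuallyEq
      ((contDiffAt_Phi hc0 z).add
        (ContDiffAt.sum fun j _ => contDiffAt_term hc0 (hrpos j) (hzne z hz j))) hE
  constructor
  · exact fun z hz => (hsmoothAt z hz).contDiffWithinAt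
  -- Part 2: the integral bound
  have h22 : ((2 : ℕ∞) : WithTop ℕ∞) ≤ ((⊤ : ℕ∞) : WithTop ℕ∞) := by exact_mod_cast le_top
  have hPhi2 : ContDiff ℝ 2 (Phi c) := by
    rw [contDiff_iff_contDiffAt]
    intro w
    exact (contDiffAt_Phi hc0 w).of_le h22
  have hVo : IsOpen {v : ℂ | v ≠ 0} := isOpen_ne
  have hFc2 : ContDiffOn ℝ 2 (Fc c) {v : ℂ | v ≠ 0} :=
    fun w hw => ((contDiffAt_Fc hc0 hw).of_le h22).contDiffWithinAt
  obtain ⟨C₀, hC₀⟩ := (isCompact_closedBall (0:ℂ) (3/2)).exists_bound_of_continuousOn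
    ((Lap_contOn isOpen_univ hPhi2.contDiffOn).mono (Set.subset_univ _))
  have hC₀0 : 0 ≤ C₀ := le_trans (norm_nonneg _) (hC₀ 0 (by
    norm_num [Metric.mem_closedBall]))
  set K1 : Set ℂ := Metric.closedBall 0 (4/3) \ Metric.ball 0 (2/3) with hK1def
  have hK1c : IsCompact K1 := (isCompact_closedBall _ _).diff Metric.isOpen_ball
  have hK1sub : K1 ⊆ {v : ℂ | v ≠ 0} := by
    intro v hv h0
    apply hv.2
    rw [h0]
    norm_num [Metric.mem_ball]
  obtain ⟨M, hM⟩ := hK1c.exists_bound_of_continuousOn ((Lap_contOn hVo hFc2).mono hK1sub)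
  have h1K1 : (1:ℂ) ∈ K1 := by
    constructor
    · norm_num [Metric.mem_closedBall]
    · norm_num [Metric.mem_ball]
  have hM0 : 0 ≤ M := le_trans (norm_nonneg _) (hM 1 h1K1)
  set B0 : Set ℂ := Metric.closedBall 0 (3/2) with hB0def
  set Ann : ℕ → Set ℂ :=
    fun j => Metric.closedBall (a j) (4/3 * r j) \ Metric.ball (a j) (2/3 * r j) with hAnnDef
  have hPhiB : ∀ z : ℂ, |De (Phi c) z| ≤ B0.indicator (fun _ => C₀) z := by
    intro z
    rcases le_or_gt (‖z‖) (3/2) with hz | hz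
    · have hzB : z ∈ B0 := by
        simp only [hB0def, Metric.mem_closedBall, Complex.dist_eq, sub_zero]
        exact hz
      rw [Set.indicator_of_mem hzB]
      rw [De_eq_Lap isOpen_univ hPhi2.contDiffOn (Set.mem_univ z)]
      simpa [Real.norm_eq_abs] using hC₀ z hzB
    · have hzB : z ∉ B0 := by
        simp only [hB0def, Metric.mem_closedBall, Complex.dist_eq, sub_zero, not_le]
        exact hz
      rw [Set.indicator_of_notMem hzB]
      have hO : IsOpen {v : ℂ | 3/2 < ‖v‖} :=
        isOpen_lt continuous_const continuous_norm
      have hE : Phi c =ᶠ[nhds z] (fun v => Real.log (‖v‖)) := by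
        filter_upwards [hO.mem_nhds hz] with v hv
        have hv' : (3/2:ℝ) ≤ ‖v‖ := le_of_lt hv
        have : H c (‖v‖) = logPlus (‖v‖) :=
          hH _ (norm_nonneg v) (by
            intro hmem
            exact absurd hmem.2 (not_lt.mpr hv'))
        rw [Phi, this, logPlus, max_eq_left (Real.log_nonneg (by linarith))]
      rw [De_congr hE, De_log (by
        intro h
        rw [h] at hz
        simp at hz
        linarith)]
      simp
  have hlog2 : ContDiffOn ℝ 2 (fun v : ℂ => Real.log (‖v‖)) {v : ℂ | v ≠ 0} :=
    fun v hv => (((Real.contDiffAt_log.mpr (norm_ne_zero_iff.mpr hv)).comp v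
      (contDiffAt_cabs hv)).of_le h22).contDiffWithinAt
  have hTermB : ∀ j, ∀ z : ℂ, z ≠ a j →
      |De (term a r c j) z| ≤ (Ann j).indicator (fun _ => M / r j) z := by
    intro j z hzaj
    have hrj := hrpos j
    have hd0 : 0 < ‖z - a j‖ := by
      rw [norm_pos_iff]
      exact sub_ne_zero.mpr hzaj
    set w0 : ℂ := (r j)⁻¹ • z + (-((r j)⁻¹ • a j)) with hw0def
    have hw0smul : w0 = (r j)⁻¹ • (z - a j) := by rw [hw0def, smul_sub]; ring
    have hw0ne : w0 ≠ 0 := by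
      rw [hw0smul]
      exact smul_ne_zero (inv_ne_zero hrj.ne') (sub_ne_zero.mpr hzaj)
    have habsw0 : ‖w0‖ = (r j)⁻¹ * ‖z - a j‖ := by
      rw [hw0smul, Complex.real_smul, norm_mul, Complex.norm_real, Real.norm_eq_abs,
        abs_of_pos (inv_pos.mpr hrj)]
    have hDe : De (term a r c j) z = r j * ((r j)⁻¹) ^ 2 * De (Fc c) w0 := by
      rw [term_eq_affine hrj]
      exact De_affine hVo hFc2 (r j) ((r j)⁻¹) _ z hw0ne
    rcases lt_or_ge (4/3 * r j) (‖z - a j‖) with hfar | hnear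
    · have hzA : z ∉ Ann j := by
        intro hzA
        have := hzA.1
        rw [Metric.mem_closedBall, Complex.dist_eq] at this
        linarith
      rw [Set.indicator_of_notMem hzA]
      have hO : IsOpen {v : ℂ | 4/3 < ‖v‖} :=
        isOpen_lt continuous_const continuous_norm
      have hvmem : w0 ∈ {v : ℂ | 4/3 < ‖v‖} := by
        show (4/3 : ℝ) < ‖w0‖
        rw [habsw0]
        rw [show (4/3 : ℝ) = (r j)⁻¹ * (4/3 * r j) by field_simp]
        exact mul_lt_mul_of_pos_left hfar (inv_pos.mpr hrj)
      have hE : Fc c =ᶠ[nhds w0] (fun _ => (0:ℝ)) := by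
        filter_upwards [hO.mem_nhds hvmem] with v hv
        exact Fc_zero hc0 (le_of_lt hv)
      rw [hDe, De_congr hE, De_const, mul_zero, abs_zero]
    · rcases lt_or_ge (‖z - a j‖) (2/3 * r j) with hclose | hmid
      · have hzA : z ∉ Ann j := by
          intro hzA
          apply hzA.2
          rw [Metric.mem_ball, Complex.dist_eq]
          exact hclose
        rw [Set.indicator_of_notMem hzA]
        have hO : IsOpen {v : ℂ | v ≠ 0 ∧ ‖v‖ < 2/3} :=
          hVo.inter (isOpen_lt continuous_norm continuous_const)
        have hvmem : w0 ∈ {v : ℂ | v ≠ 0 ∧ ‖v‖ < 2/3} := by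
          refine ⟨hw0ne, ?_⟩
          rw [habsw0, show (2/3 : ℝ) = (r j)⁻¹ * (2/3 * r j) by field_simp]
          exact mul_lt_mul_of_pos_left hclose (inv_pos.mpr hrj)
        have hE : Fc c =ᶠ[nhds w0]
            (fun v => (-1 : ℝ) * Real.log (‖(1:ℝ) • v + 0‖)) := by
          filter_upwards [hO.mem_nhds hvmem] with v hv
          have hv1 : v ≠ 0 := hv.1
          have hv2 : ‖v‖ < 2/3 := hv.2
          have hvpos : 0 < ‖v‖ := by
            rw [norm_pos_iff]
            exact hv1
          have hinv : (3/2:ℝ) ≤ (‖v‖)⁻¹ := by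
            have := inv_anti₀ hvpos (le_of_lt hv2)
            calc (3/2:ℝ) = (2/3 : ℝ)⁻¹ := by norm_num
              _ ≤ (‖v‖)⁻¹ := this
          have h1 : H c (‖v‖)⁻¹ = logPlus (‖v‖)⁻¹ :=
            hH _ (by positivity) (by
              intro hmem
              exact absurd hmem.2 (not_lt.mpr hinv))
          show Fc c v = _
          rw [Fc, h1, logPlus, max_eq_left (Real.log_nonneg (by linarith)), Real.log_inv]
          simp
        rw [hDe, De_congr hE,
          De_affine hVo hlog2 (-1) 1 0 w0 (by simpa using hw0ne),
          De_log (by simpa using hw0ne)]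
        simp
      · have hzA : z ∈ Ann j := by
          constructor
          · rw [Metric.mem_closedBall, Complex.dist_eq]
            linarith
          · rw [Metric.mem_ball, Complex.dist_eq, not_lt]
            exact hmid
        rw [Set.indicator_of_mem hzA]
        have hw0K : w0 ∈ K1 := by
          constructor
          · rw [Metric.mem_closedBall, Complex.dist_eq, sub_zero, habsw0,
              show (4/3 : ℝ) = (r j)⁻¹ * (4/3 * r j) by field_simp]
            exact mul_le_mul_of_nonneg_left hnear (le_of_lt (inv_pos.mpr hrj))
          · rw [Metric.mem_ball, Complex.dist_eq, sub_zero, not_lt, habsw0,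
              show (2/3 : ℝ) = (r j)⁻¹ * (2/3 * r j) by field_simp]
            exact mul_le_mul_of_nonneg_left hmid (le_of_lt (inv_pos.mpr hrj))
        have hDeFc : De (Fc c) w0 = Lap (Fc c) w0 := De_eq_Lap hVo hFc2 hw0ne
        rw [hDe, hDeFc, abs_mul]
        have h1 : |r j * ((r j)⁻¹) ^ 2| = (r j)⁻¹ := by
          rw [show r j * ((r j)⁻¹) ^ 2 = (r j)⁻¹ by field_simp]
          exact abs_of_pos (inv_pos.mpr hrj)
        rw [h1, div_eq_inv_mul]
        apply mul_le_mul_of_nonneg_left _ (le_of_lt (inv_pos.mpr hrj))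
        have := hM w0 hw0K
        rwa [Real.norm_eq_abs] at this
  -- master pointwise bound
  set GG : ℂ → ENNReal := fun z => B0.indicator (fun _ => ENNReal.ofReal C₀) z +
    ∑' j, (Ann j).indicator (fun _ => ENNReal.ofReal (M / r j)) z with hGGdef
  have master : ∀ z ∈ (Set.range a)ᶜ, ENNReal.ofReal |De (tau a r c) z| ≤ GG z := by
    intro z hz
    obtain ⟨N, hE⟩ := hlocal z
    have hDval : De (tau a r c) z
        = De (Phi c) z + ∑ j ∈ Finset.range N, De (term a r c j) z := by
      rw [De_congr hE,
        De_add ((contDiffAt_Phi hc0 z).of_le h22)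
          (ContDiffAt.sum fun j _ => ((contDiffAt_term hc0 (hrpos j) (hzne z hz j)).of_le h22)),
        De_sum (fun j _ => ((contDiffAt_term hc0 (hrpos j) (hzne z hz j)).of_le h22))]
    rw [hDval]
    have hnn1 : 0 ≤ B0.indicator (fun _ => C₀) z := Set.indicator_nonneg (fun _ _ => hC₀0) z
    have hnn2 : ∀ j, 0 ≤ (Ann j).indicator (fun _ => M / r j) z :=
      fun j => Set.indicator_nonneg (fun _ _ => div_nonneg hM0 (hrpos j).le) z
    calc ENNReal.ofReal |De (Phi c) z + ∑ j ∈ Finset.range N, De (term a r c j) z|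
        ≤ ENNReal.ofReal (|De (Phi c) z| + ∑ j ∈ Finset.range N, |De (term a r c j) z|) := by
          apply ENNReal.ofReal_le_ofReal
          exact le_trans (abs_add_le _ _)
            (add_le_add_right (Finset.abs_sum_le_sum_abs _ _) _)
      _ ≤ ENNReal.ofReal (B0.indicator (fun _ => C₀) z
            + ∑ j ∈ Finset.range N, (Ann j).indicator (fun _ => M / r j) z) := by
          apply ENNReal.ofReal_le_ofReal
          exact add_le_add (hPhiB z)
            (Finset.sum_le_sum fun j _ => hTermB j z (hzne z hz j))
      _ = ENNReal.ofReal (B0.indicator (fun _ => C₀) z)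
            + ∑ j ∈ Finset.range N, ENNReal.ofReal ((Ann j).indicator (fun _ => M / r j) z) := by
          rw [ENNReal.ofReal_add hnn1 (Finset.sum_nonneg fun j _ => hnn2 j),
            ENNReal.ofReal_sum_of_nonneg (fun j _ => hnn2 j)]
      _ ≤ GG z := by
          apply add_le_add
          · by_cases hzB : z ∈ B0 <;> simp [hzB]
          · refine le_trans (le_of_eq ?_) (ENNReal.sum_le_tsum (Finset.range N))
            apply Finset.sum_congr rfl
            intro j _
            by_cases hzA : z ∈ Ann j <;> simp [hzA]
  -- integrate
  have hsMeas : MeasurableSet ((Set.range a)ᶜ : Set ℂ) :=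
    ((Set.countable_range a).measurableSet).compl
  have hB0Meas : MeasurableSet B0 := measurableSet_closedBall
  have hAnnMeas : ∀ j, MeasurableSet (Ann j) :=
    fun j => measurableSet_closedBall.diff measurableSet_ball
  show ∫⁻ z in (Set.range a)ᶜ, ENNReal.ofReal |De (tau a r c) z| < ⊤
  have hvol1 : volume (Metric.closedBall (0:ℂ) 1) < ⊤ := measure_closedBall_lt_top
  have step1 : ∫⁻ z in (Set.range a)ᶜ, ENNReal.ofReal |De (tau a r c) z|
      ≤ ∫⁻ z, GG z := le_trans (setLIntegral_mono' hsMeas master)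
        (setLIntegral_le_lintegral _ _)
  have step2 : ∫⁻ z, GG z = ENNReal.ofReal C₀ * volume B0
      + ∑' j, ENNReal.ofReal (M / r j) * volume (Ann j) := by
    rw [hGGdef, lintegral_add_left (measurable_const.indicator hB0Meas),
      lintegral_indicator_const hB0Meas,
      lintegral_tsum (fun j => ((measurable_const.indicator (hAnnMeas j))).aemeasurable)]
    congr 1
    exact tsum_congr (fun j => lintegral_indicator_const (hAnnMeas j) _)
  have step3 : ∑' j, ENNReal.ofReal (M / r j) * volume (Ann j)
      ≤ ∑' j, ENNReal.ofReal ((16/9) * M * r j) * volume (Metric.closedBall (0:ℂ) 1) := by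
    apply ENNReal.tsum_le_tsum
    intro j
    calc ENNReal.ofReal (M / r j) * volume (Ann j)
        ≤ ENNReal.ofReal (M / r j) * volume (Metric.closedBall (a j) (4/3 * r j)) :=
          mul_le_mul_right (measure_mono (show Ann j ⊆ _ from Set.diff_subset)) _
      _ = ENNReal.ofReal (M / r j) * (ENNReal.ofReal ((4/3 * r j) ^ Module.finrank ℝ ℂ)
            * volume (Metric.closedBall (0:ℂ) 1)) := by
          rw [Measure.addHaar_closedBall' _ _ (mul_nonneg (by norm_num) (hrpos j).le)]
      _ = ENNReal.ofReal ((16/9) * M * r j) * volume (Metric.closedBall (0:ℂ) 1) := by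
          rw [← mul_assoc, ← ENNReal.ofReal_mul (div_nonneg hM0 (hrpos j).le),
            finrank_real_complex]
          congr 2
          field_simp [(hrpos j).ne']
          ring
  have step4 : ∑' j, ENNReal.ofReal ((16/9) * M * r j) * volume (Metric.closedBall (0:ℂ) 1)
      = ENNReal.ofReal (∑' j, (16/9) * M * r j) * volume (Metric.closedBall (0:ℂ) 1) := by
    rw [ENNReal.tsum_mul_right,
      ENNReal.ofReal_tsum_of_nonneg (fun j => mul_nonneg (by positivity) (hrpos j).le)
        (hsum.mul_left _)]
  refine lt_of_le_of_lt step1 ?_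
  rw [step2]
  apply ENNReal.add_lt_top.mpr
  constructor
  · exact ENNReal.mul_lt_top ENNReal.ofReal_lt_top measure_closedBall_lt_top
  · refine lt_of_le_of_lt step3 ?_
    rw [step4]
    exact ENNReal.mul_lt_top ENNReal.ofReal_lt_top hvol1
end
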